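/- For all 0<q<1 and every integer n≥1, the offset satisfies b_n(q) < 1; equivalently, the sum Σ_{k=1}^{n} λ_{k−1}(q)·λ_{n−k}(q) is strictly less than n·κ(q)² + 1. -/

import Mathlib

/-- Partial product of the Euler function: `λ_k(q) = ∏_{i=1}^k (1 - q^i)`, with `λ_0(q) = 1`. -/
noncomputable def eulerLam (q : ℝ) (k : ℕ) : ℝ := ∏ i ∈ Finset.range k, (1 - q ^ (i + 1))

/-- The Euler function `κ(q) = ∏_{i=1}^∞ (1 - q^i)`. -/
noncomputable def eulerKappa (q : ℝ) : ℝ := ∏' i : ℕ, (1 - q ^ (i + 1))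

/-- The tail product `μ_n(q) = ∏_{i=n}^∞ (1 - q^i)`. -/
noncomputable def eulerMu (q : ℝ) (n : ℕ) : ℝ := ∏' i : ℕ, (1 - q ^ (n + i))

/-- The offset `b_n(q) = Σ_{k=1}^n λ_{k-1}(q) λ_{n-k}(q) - n κ(q)²`, the expected number of
posts in a random graph order on `n` elements minus `n κ(q)²`. -/
noncomputable def postOffset (q : ℝ) (n : ℕ) : ℝ :=
  (∑ k ∈ Finset.Icc 1 n, eulerLam q (k - 1) * eulerLam q (n - k)) - n * eulerKappa q ^ 2


/-!
Write `d_j = λ_j - κ ≥ 0`. Reflecting the sum gives `b_n = Σ_{j<n} d_j (λ_{n-1-j} + κ)`.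
Since `κ = λ_j ∏_{i>j} (1 - q^i)` and the tail product is at least `1 - q^{j+1}/(1 - q)`
(Weierstrass product inequality), `κ ≥ 1 - q - q²` and `d_{j+1} ≤ q d_j`. For `n ≤ 3` the offset
is an explicit quadratic in `κ`. For `n ≥ 4` the terms with `j ≥ 3` add up to at most
`(1 + κ) q d_2 / (1 - q)` and the first three are at most their values for `n = 4`; the resulting
bound is a concave quadratic in `κ`, so it suffices to check it at `κ = max 0 (1 - q - q²)`.
-/

open Finset Filter Topology

theorem Finset.one_sub_sum_le_prod_one_sub {ι R : Type*} [CommRing R] [LinearOrder R]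
    [IsStrictOrderedRing R] (s : Finset ι) {a : ι → R} (h0 : ∀ i ∈ s, 0 ≤ a i)
    (h1 : ∀ i ∈ s, a i ≤ 1) : 1 - ∑ i ∈ s, a i ≤ ∏ i ∈ s, (1 - a i) := by
  classical
  induction s using Finset.induction_on with
  | empty => simp
  | insert j s hj ih =>
    rw [sum_insert hj, prod_insert hj]
    have hprod : ∏ i ∈ s, (1 - a i) ≤ 1 :=
      prod_le_one (fun i hi ↦ sub_nonneg.2 (h1 i (mem_insert_of_mem hi)))
        (fun i hi ↦ sub_le_self _ (h0 i (mem_insert_of_mem hi)))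
    have ih := ih (fun i hi ↦ h0 i (mem_insert_of_mem hi)) (fun i hi ↦ h1 i (mem_insert_of_mem hi))
    nlinarith [mul_le_mul_of_nonneg_left hprod (h0 j (mem_insert_self j s))]

theorem one_sub_mul_sum_range_succ_le {R : Type*} [CommRing R] [LinearOrder R]
    [IsStrictOrderedRing R] {a : ℕ → R} {q : R} (ha : ∀ i, 0 ≤ a i) (hq : 0 ≤ q)
    (h : ∀ i, a (i + 1) ≤ q * a i) (m : ℕ) :
    (1 - q) * ∑ i ∈ range m, a (i + 1) ≤ q * a 0 := by
  have hshift : ∑ i ∈ range m, a (i + 1) ≤ q * ∑ i ∈ range m, a i := by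
    rw [mul_sum]; exact sum_le_sum fun i _ ↦ h i
  have hsucc : ∑ i ∈ range m, a i ≤ ∑ i ∈ range m, a (i + 1) + a 0 := by
    rw [← sum_range_succ']; exact sum_le_sum_of_subset_of_nonneg
      (range_subset_range.2 m.le_succ) fun i _ _ ↦ ha i
  nlinarith

theorem sum_range_mul_reflect_sub {R : Type*} [CommRing R] (f : ℕ → R) (c : R) (n : ℕ) :
    ∑ j ∈ range n, f j * f (n - 1 - j) - n * c ^ 2 =
      ∑ j ∈ range n, (f j - c) * (f (n - 1 - j) + c) := by
  have hreflect : ∑ j ∈ range n, f (n - 1 - j) = ∑ j ∈ range n, f j := sum_range_reflect f n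
  simp only [sub_mul, mul_add, sum_sub_distrib, sum_add_distrib, ← mul_sum, ← sum_mul, hreflect]
  rw [sum_const, card_range, nsmul_eq_mul]
  ring

theorem antitoneOn_mul_sub_mul_sq {R : Type*} [CommRing R] [LinearOrder R] [IsStrictOrderedRing R]
    {a b x : R} (ha : 0 ≤ a) (hb : b ≤ 2 * a * x) :
    AntitoneOn (fun t ↦ b * t - a * t ^ 2) (Set.Ici x) := by
  intro s hs t _ hst
  have hxs : x ≤ s := hs
  nlinarith [mul_le_mul_of_nonneg_left (add_le_add hxs (hxs.trans hst)) ha]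

section EulerProducts

variable {q : ℝ}

theorem eulerLam_succ (q : ℝ) (k : ℕ) : eulerLam q (k + 1) = eulerLam q k * (1 - q ^ (k + 1)) :=
  prod_range_succ _ _

theorem eulerLam_zero (q : ℝ) : eulerLam q 0 = 1 := prod_range_zero _

theorem eulerLam_one (q : ℝ) : eulerLam q 1 = 1 - q := by simp [eulerLam]

theorem eulerLam_two (q : ℝ) : eulerLam q 2 = (1 - q) * (1 - q ^ 2) := by
  rw [eulerLam_succ, eulerLam_one]

theorem eulerLam_three (q : ℝ) : eulerLam q 3 = (1 - q) * (1 - q ^ 2) * (1 - q ^ 3) := by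
  rw [eulerLam_succ, eulerLam_two]

theorem multipliable_one_sub_pow (hq : |q| < 1) (n : ℕ) :
    Multipliable fun i : ℕ ↦ 1 - q ^ (n + i) := by
  simpa only [sub_eq_add_neg] using Real.multipliable_one_add_of_summable
    (((summable_geometric_of_abs_lt_one hq).mul_left (q ^ n)).neg.congr fun i ↦ by ring)

theorem eulerKappa_eq_eulerLam_mul_eulerMu (hq : |q| < 1) (n : ℕ) :
    eulerKappa q = eulerLam q n * eulerMu q (n + 1) := by
  have h : Multipliable fun i : ℕ ↦ 1 - q ^ (i + n + 1) :=
    (multipliable_one_sub_pow hq (n + 1)).congr fun i ↦ by ring_nf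
  rw [eulerKappa, ← h.prod_mul_tprod_nat_mul' (f := fun i ↦ 1 - q ^ (i + 1)), eulerLam, eulerMu]
  congr 2 with i
  ring_nf

variable (hq0 : 0 ≤ q) (hq1 : q < 1)
include hq0 hq1

theorem tendsto_prod_range_eulerMu (n : ℕ) :
    Tendsto (fun m ↦ ∏ i ∈ range m, (1 - q ^ (n + i))) atTop (𝓝 (eulerMu q n)) :=
  (multipliable_one_sub_pow (abs_lt.2 ⟨by linarith, hq1⟩) n).hasProd.tendsto_prod_nat

theorem eulerMu_le_one (n : ℕ) : eulerMu q n ≤ 1 :=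
  le_of_tendsto' (tendsto_prod_range_eulerMu hq0 hq1 n) fun _ ↦
    prod_le_one (fun _ _ ↦ sub_nonneg.2 (pow_le_one₀ hq0 hq1.le))
      (fun _ _ ↦ sub_le_self _ (pow_nonneg hq0 _))

theorem one_sub_pow_div_le_eulerMu (n : ℕ) : 1 - q ^ n / (1 - q) ≤ eulerMu q n := by
  refine ge_of_tendsto' (tendsto_prod_range_eulerMu hq0 hq1 n) fun m ↦ ?_
  have hgeom : ∑ i ∈ range m, q ^ (n + i) ≤ q ^ n / (1 - q) := by
    simpa [sum_Ico_eq_sum_range] using geom_sum_Ico_le_of_lt_one (m := n) (n := n + m) hq0 hq1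
  exact (sub_le_sub_left hgeom 1).trans (one_sub_sum_le_prod_one_sub _
    (fun i _ ↦ pow_nonneg hq0 _) fun i _ ↦ pow_le_one₀ hq0 hq1.le)

theorem one_sub_pow_succ_pos (n : ℕ) : 0 < 1 - q ^ (n + 1) :=
  sub_pos.2 (pow_lt_one₀ hq0 hq1 n.succ_ne_zero)

theorem eulerLam_pos (n : ℕ) : 0 < eulerLam q n :=
  prod_pos fun i _ ↦ one_sub_pow_succ_pos hq0 hq1 i

theorem eulerLam_antitone : Antitone (eulerLam q) :=
  antitone_nat_of_succ_le fun n ↦ by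
    rw [eulerLam_succ]
    exact mul_le_of_le_one_right (eulerLam_pos hq0 hq1 n).le (sub_le_self _ (pow_nonneg hq0 _))

theorem eulerLam_le_one (n : ℕ) : eulerLam q n ≤ 1 :=
  eulerLam_zero q ▸ eulerLam_antitone hq0 hq1 n.zero_le

theorem eulerKappa_eq_eulerLam_mul_eulerMu' (n : ℕ) :
    eulerKappa q = eulerLam q n * eulerMu q (n + 1) :=
  eulerKappa_eq_eulerLam_mul_eulerMu (abs_lt.2 ⟨by linarith, hq1⟩) n

theorem eulerKappa_le_eulerLam (n : ℕ) : eulerKappa q ≤ eulerLam q n := by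
  rw [eulerKappa_eq_eulerLam_mul_eulerMu' hq0 hq1 n]
  exact mul_le_of_le_one_right (eulerLam_pos hq0 hq1 n).le (eulerMu_le_one hq0 hq1 _)

theorem eulerKappa_pos : 0 < eulerKappa q := by
  obtain ⟨N, hN⟩ := exists_pow_lt_of_lt_one (sub_pos.2 hq1) hq1
  have hμ : 0 < eulerMu q (N + 1) := by
    refine lt_of_lt_of_le ?_ (one_sub_pow_div_le_eulerMu hq0 hq1 (N + 1))
    rw [sub_pos, div_lt_one (sub_pos.2 hq1)]
    exact (pow_le_pow_of_le_one hq0 hq1.le N.le_succ).trans_lt hN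
  rw [eulerKappa_eq_eulerLam_mul_eulerMu' hq0 hq1 N]
  exact mul_pos (eulerLam_pos hq0 hq1 N) hμ

theorem eulerLam_sub_eulerKappa_le (n : ℕ) :
    eulerLam q n - eulerKappa q ≤ eulerLam q n * (q ^ (n + 1) / (1 - q)) := by
  have hμ := one_sub_pow_div_le_eulerMu hq0 hq1 (n + 1)
  rw [eulerKappa_eq_eulerLam_mul_eulerMu' hq0 hq1 n]
  nlinarith [eulerLam_pos hq0 hq1 n]

theorem eulerLam_succ_sub_eulerKappa_le (n : ℕ) :
    eulerLam q (n + 1) - eulerKappa q ≤ q * (eulerLam q n - eulerKappa q) := by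
  have hx := one_sub_pow_succ_pos hq0 hq1 n
  have hμ : 1 - q - q * q ^ (n + 1) ≤ (1 - q) * eulerMu q (n + 2) := by
    have h := mul_le_mul_of_nonneg_left (one_sub_pow_div_le_eulerMu hq0 hq1 (n + 2))
      (sub_nonneg.2 hq1.le)
    rwa [mul_sub, mul_one, mul_div_cancel₀ _ (sub_pos.2 hq1).ne',
      show q ^ (n + 2) = q * q ^ (n + 1) by ring] at h
  have key : 1 - q - q ^ (n + 1) ≤ (1 - q ^ (n + 1)) * ((1 - q) * eulerMu q (n + 2)) := by
    nlinarith [mul_nonneg hq0 (sq_nonneg (q ^ (n + 1))), mul_le_mul_of_nonneg_left hμ hx.le]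
  rw [eulerKappa_eq_eulerLam_mul_eulerMu' hq0 hq1 (n + 1), eulerLam_succ]
  nlinarith [mul_le_mul_of_nonneg_left key (eulerLam_pos hq0 hq1 n).le]

end EulerProducts

theorem postOffset_eq_sum_range (q : ℝ) (n : ℕ) :
    postOffset q n = ∑ j ∈ range n,
      (eulerLam q j - eulerKappa q) * (eulerLam q (n - 1 - j) + eulerKappa q) := by
  rw [postOffset, ← sum_range_mul_reflect_sub, ← Ico_add_one_right_eq_Icc, sum_Ico_eq_sum_range]
  congr 1
  refine sum_congr (by simp) fun j _ ↦ ?_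
  congr 2 <;> omega

/-- `(1 - q)` times the bound on `postOffset q n`, `n ≥ 4`, obtained from `postOffset_eq_sum_range`
by raising `λ_{n-1-j}` to `λ_{3-j}` for `j < 3` and to `1` for `j ≥ 3`, and using
`(1 - q) Σ_{j≥3} d_j ≤ q d_2`. -/
noncomputable def postOffsetTailBound (q K : ℝ) : ℝ :=
  ((1 - K) * (eulerLam q 3 + K) + (eulerLam q 1 - K) * (eulerLam q 2 + K)
    + (eulerLam q 2 - K) * (eulerLam q 1 + K)) * (1 - q) + (1 + K) * (q * (eulerLam q 2 - K))

section Offset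

variable {q : ℝ} (hq0 : 0 ≤ q) (hq1 : q < 1)
include hq0 hq1

theorem one_sub_sub_sq_le_eulerKappa : 1 - q - q ^ 2 ≤ eulerKappa q := by
  have h := eulerLam_sub_eulerKappa_le hq0 hq1 1
  rw [eulerLam_one, mul_div_cancel₀ _ (sub_pos.2 hq1).ne', one_add_one_eq_two] at h
  linarith

theorem postOffset_one_lt_one : postOffset q 1 < 1 := by
  simp only [postOffset_eq_sum_range, range_one, tsub_self, zero_tsub, eulerLam_zero,
    sum_singleton]
  nlinarith [eulerKappa_pos hq0 hq1]

theorem postOffset_two_lt_one : postOffset q 2 < 1 := by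
  have hK := eulerKappa_pos hq0 hq1
  have hko := one_sub_sub_sq_le_eulerKappa hq0 hq1
  simp only [postOffset_eq_sum_range, Nat.add_one_sub_one, sum_range_succ, range_one,
    sum_singleton, eulerLam_zero, tsub_zero, eulerLam_one, tsub_self]
  rcases le_total (1 - q - q ^ 2) 0 with h | h
  · nlinarith
  · nlinarith [pow_le_pow_left₀ h hko 2, sq_nonneg (q ^ 2 + q - 1 / 2)]

theorem postOffset_three_lt_one : postOffset q 3 < 1 := by
  have hK := eulerKappa_pos hq0 hq1
  have hko := one_sub_sub_sq_le_eulerKappa hq0 hq1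
  simp only [postOffset_eq_sum_range, Nat.add_one_sub_one, sum_range_succ, range_one,
    sum_singleton, eulerLam_zero, tsub_zero, eulerLam_two, eulerLam_one, tsub_self]
  rcases le_total (1 - q - q ^ 2) 0 with h | h
  · nlinarith
  · nlinarith [pow_le_pow_left₀ h hko 2, sq_nonneg (q ^ 2 + q - 1 / 2)]

theorem one_sub_mul_postOffset_le_tailBound (m : ℕ) :
    (1 - q) * postOffset q (m + 4) ≤ postOffsetTailBound q (eulerKappa q) := by
  have hL := eulerLam_antitone hq0 hq1
  have hd : ∀ j, 0 ≤ eulerLam q j - eulerKappa q :=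
    fun j ↦ sub_nonneg.2 (eulerKappa_le_eulerLam hq0 hq1 j)
  rw [postOffset_eq_sum_range, show m + 4 = 3 + (m + 1) by omega, sum_range_add]
  have hhead : ∑ j ∈ range 3, (eulerLam q j - eulerKappa q) *
        (eulerLam q (3 + (m + 1) - 1 - j) + eulerKappa q) ≤
      (eulerLam q 0 - eulerKappa q) * (eulerLam q 3 + eulerKappa q)
        + (eulerLam q 1 - eulerKappa q) * (eulerLam q 2 + eulerKappa q)
        + (eulerLam q 2 - eulerKappa q) * (eulerLam q 1 + eulerKappa q) := by
    simp only [sum_range_succ, range_one, sum_singleton]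
    gcongr <;> first | exact hd _ | exact hL (by omega)
  have htail : ∑ i ∈ range (m + 1), (eulerLam q (3 + i) - eulerKappa q) *
        (eulerLam q (3 + (m + 1) - 1 - (3 + i)) + eulerKappa q) ≤
      (∑ i ∈ range (m + 1), (eulerLam q (i + 1 + 2) - eulerKappa q)) * (1 + eulerKappa q) := by
    rw [sum_mul]
    refine sum_le_sum fun i _ ↦ ?_
    rw [show i + 1 + 2 = 3 + i by omega]
    exact mul_le_mul_of_nonneg_left (add_le_add_left (eulerLam_le_one hq0 hq1 _) _) (hd _)
  have hgeom : (1 - q) * ∑ i ∈ range (m + 1), (eulerLam q (i + 1 + 2) - eulerKappa q) ≤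
      q * (eulerLam q 2 - eulerKappa q) :=
    one_sub_mul_sum_range_succ_le (a := fun i ↦ eulerLam q (i + 2) - eulerKappa q)
      (fun _ ↦ hd _) hq0 (fun i ↦ eulerLam_succ_sub_eulerKappa_le hq0 hq1 (i + 2)) _
  have hq : 0 ≤ 1 - q := sub_nonneg.2 hq1.le
  have hK : 0 ≤ 1 + eulerKappa q := by linarith [eulerKappa_pos hq0 hq1]
  rw [eulerLam_zero] at hhead
  rw [postOffsetTailBound]
  linarith [mul_le_mul_of_nonneg_left hhead hq, mul_le_mul_of_nonneg_left htail hq,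
    mul_le_mul_of_nonneg_right hgeom hK]

theorem postOffsetTailBound_lt {K : ℝ} (hK0 : 0 ≤ K) (hK : 1 - q - q ^ 2 ≤ K) :
    postOffsetTailBound q K < 1 - q := by
  set β := q - q ^ 2 - 2 * q ^ 3 + 2 * q ^ 6 - q ^ 7
  have hquad : ∀ t, postOffsetTailBound q t =
      postOffsetTailBound q 0 + (β * t - (3 - 2 * q) * t ^ 2) := fun t ↦ by
    simp only [postOffsetTailBound, eulerLam_one, eulerLam_two, eulerLam_three, β]
    ring
  -- The vertex condition on `β` holds at `x = 1 - q - q²` for `q ≤ 0.64` and at `x = 0` for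
  -- `q ≥ 0.52`, whence the split at `3 / 5`.
  have hreduce : ∀ x, x ≤ K → β ≤ 2 * (3 - 2 * q) * x → postOffsetTailBound q x < 1 - q →
      postOffsetTailBound q K < 1 - q := fun x hxK hβ hx ↦ by
    have := antitoneOn_mul_sub_mul_sq (by linarith) hβ Set.self_mem_Ici (Set.mem_Ici.2 hxK) hxK
    rw [hquad x] at hx
    rw [hquad K]
    linarith
  have hq : 0 < 1 - q := sub_pos.2 hq1
  rcases le_total q (3 / 5) with h | h
  · refine hreduce _ hK ?_ ?_
    · have h6 : q ^ 6 ≤ (3 / 5) ^ 6 := pow_le_pow_left₀ hq0 h 6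
      nlinarith [mul_nonneg (sub_nonneg.2 h) (sq_nonneg q), mul_nonneg (sub_nonneg.2 h) hq0,
        pow_nonneg hq0 7]
    · have hg :
          0 < 1 - 2 * q - 2 * q ^ 2 + 4 * q ^ 3 + 4 * q ^ 4 - 2 * q ^ 5 - 2 * q ^ 6 + q ^ 8 := by
        nlinarith [sq_nonneg (q ^ 4 - q ^ 2 - q + 1 / 2), sq_nonneg (q ^ 2 - 1 / 2),
          mul_nonneg hq0 hq.le, pow_nonneg hq0 3, pow_nonneg hq0 5]
      simp only [postOffsetTailBound, eulerLam_one, eulerLam_two, eulerLam_three]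
      nlinarith [mul_pos hq hg]
  · refine hreduce 0 hK0 ?_ ?_
    · nlinarith [mul_nonneg (sub_nonneg.2 h) hq.le, pow_nonneg hq0 3, pow_nonneg hq0 5]
    · have hg : 0 < -2 + 4 * q + q ^ 2 - 3 * q ^ 3 + q ^ 4 - q ^ 5 + q ^ 6 := by
        nlinarith [mul_nonneg (sub_nonneg.2 h) hq.le, pow_nonneg hq0 3, pow_nonneg hq0 4]
      simp only [postOffsetTailBound, eulerLam_one, eulerLam_two, eulerLam_three]
      nlinarith [mul_pos hq hg]

theorem postOffset_add_four_lt_one (m : ℕ) : postOffset q (m + 4) < 1 := by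
  have h := one_sub_mul_postOffset_le_tailBound hq0 hq1 m
  have h' := postOffsetTailBound_lt hq0 hq1 (eulerKappa_pos hq0 hq1).le
    (one_sub_sub_sq_le_eulerKappa hq0 hq1)
  exact lt_of_mul_lt_mul_left (by linarith : (1 - q) * postOffset q (m + 4) < (1 - q) * 1)
    (sub_nonneg.2 hq1.le)

end Offset

theorem postOffset_lt_one_general (q : ℝ) (hq0 : 0 < q) (hq1 : q < 1) (n : ℕ) :
    postOffset q n < 1 ∧
    (∑ k ∈ Finset.Icc 1 n, eulerLam q (k - 1) * eulerLam q (n - k)) <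
      n * eulerKappa q ^ 2 + 1 := by
  have hq : 0 ≤ q := hq0.le
  have hoffset : postOffset q n < 1 := by
    obtain _ | _ | _ | _ | m := n
    · simp [postOffset]
    · exact postOffset_one_lt_one hq hq1
    · exact postOffset_two_lt_one hq hq1
    · exact postOffset_three_lt_one hq hq1
    · exact postOffset_add_four_lt_one hq hq1 m
  exact ⟨hoffset, by rw [postOffset] at hoffset; linarith⟩

/-- For all `0 < q < 1` and every integer `n ≥ 1`, the offset satisfies `b_n(q) < 1`;
equivalently `Σ_{k=1}^n λ_{k-1}(q)·λ_{n-k}(q) < n·κ(q)² + 1`. -/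
theorem postOffset_lt_one (q : ℝ) (hq0 : 0 < q) (hq1 : q < 1) (n : ℕ) (hn : 1 ≤ n) :
    postOffset q n < 1 ∧
    (∑ k ∈ Finset.Icc 1 n, eulerLam q (k - 1) * eulerLam q (n - k)) <
      n * eulerKappa q ^ 2 + 1 :=
  postOffset_lt_one_general q hq0 hq1 n
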